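/- (Chain-type X operators commute with punctured Z-stabilizers.) Let x ∈ F₂^V satisfy 1_{Tᶜ}·H·x = 0 (where Tᶜ is the complement of T in C, i.e. H·x is supported on T) and let y ∈ F₂^V be supported on S. Then (x ⊗ y | 0)·(H_Z + H_Z')ᵗ = 0. Likewise, let x' ∈ F₂^C satisfy 1_{Sᶜ}·Hᵗ·x' = 0 (where Sᶜ is the complement of S in V) and let y' ∈ F₂^C be supported on T. Then (0 | y' ⊗ x')·(H_Z + H_Z')ᵗ = 0. -/

import Mathlib

open Matrix Kronecker

variable {V C : Type*} [Fintype V] [Fintype C] [DecidableEq V] [DecidableEq C]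

/-- X-stabilizer matrix `H_X = (1_V ⊗ H | Hᵗ ⊗ 1_C)` of the hypergraph product of `H`
with itself. Rows are indexed by `V × C`, column blocks by `V × V` and `C × C`. -/
def HX (H : Matrix C V (ZMod 2)) : Matrix (V × C) ((V × V) ⊕ (C × C)) (ZMod 2) :=
  Matrix.fromCols ((1 : Matrix V V (ZMod 2)) ⊗ₖ H) (Hᵀ ⊗ₖ (1 : Matrix C C (ZMod 2)))

/-- Z-stabilizer matrix `H_Z = (H ⊗ 1_V | 1_C ⊗ Hᵗ)`. Rows are indexed by `C × V`. -/
def HZ (H : Matrix C V (ZMod 2)) : Matrix (C × V) ((V × V) ⊕ (C × C)) (ZMod 2) :=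
  Matrix.fromCols (H ⊗ₖ (1 : Matrix V V (ZMod 2))) ((1 : Matrix C C (ZMod 2)) ⊗ₖ Hᵀ)

/-- Diagonal 0–1 projector matrix `1_P` onto a subset `P`. -/
def projM {α : Type*} [Fintype α] [DecidableEq α] (P : Finset α) : Matrix α α (ZMod 2) :=
  Matrix.diagonal fun a => if a ∈ P then 1 else 0

/-- Neighborhood `N = {c ∈ C : ∃ v ∈ S, H c v = 1}` of a set `S` of variable nodes. -/
def Nbhd (H : Matrix C V (ZMod 2)) (S : Finset V) : Finset C :=
  @Finset.filter C (fun c => ∃ v ∈ S, H c v = 1) (fun _ => inferInstance) Finset.univ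

/-- Ancestor `A = {c ∈ C : ∀ v, H c v = 1 → v ∈ S}` of a set `S` of variable nodes. -/
def Anc (H : Matrix C V (ZMod 2)) (S : Finset V) : Finset C :=
  @Finset.filter C (fun c => ∀ v, H c v = 1 → v ∈ S) (fun _ => inferInstance) Finset.univ

/-- Neighborhood `M = {v ∈ V : ∃ c ∈ T, H c v = 1}` of a set `T` of check nodes. -/
def NbhdT (H : Matrix C V (ZMod 2)) (T : Finset C) : Finset V :=
  Finset.univ.filter fun v => ∃ c ∈ T, H c v = 1

/-- Ancestor `B = {v ∈ V : ∀ c, H c v = 1 → c ∈ T}` of a set `T` of check nodes. -/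
def AncT (H : Matrix C V (ZMod 2)) (T : Finset C) : Finset V :=
  Finset.univ.filter fun v => ∀ c, H c v = 1 → c ∈ T

/-- Smooth-puncture X matrix `H_X' = (1_B ⊗ H_S | H_Tᵗ ⊗ 1_A)`,
where `H_S = H·1_S` and `H_T = 1_T·H`. -/
def HX' (H : Matrix C V (ZMod 2)) (S : Finset V) (T : Finset C) :
    Matrix (V × C) ((V × V) ⊕ (C × C)) (ZMod 2) :=
  Matrix.fromCols (projM (AncT H T) ⊗ₖ (H * projM S)) ((projM T * H)ᵀ ⊗ₖ projM (Anc H S))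

/-- Smooth-puncture Z matrix `H_Z' = (H_T ⊗ 1_S | 1_T ⊗ H_Sᵗ)`. -/
def HZ' (H : Matrix C V (ZMod 2)) (S : Finset V) (T : Finset C) :
    Matrix (C × V) ((V × V) ⊕ (C × C)) (ZMod 2) :=
  Matrix.fromCols ((projM T * H) ⊗ₖ projM S) (projM T ⊗ₖ (H * projM S)ᵀ)

/-!
Both Kronecker blocks act factorwise on a product vector. Since `1_S y = y`, the first block of
`H_Z + H_Z'` sends `x ⊗ y` to `(H x + 1_T H x) ⊗ y = (1_{Tᶜ} H x) ⊗ y`, because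
`1 + 1_T = 1_{Tᶜ}` over `𝔽₂`; this vanishes by hypothesis. Symmetrically the second block sends
`y' ⊗ x'` to `y' ⊗ (1_{Sᶜ} Hᵀ x')`.
-/

def kronVec {m n R : Type*} [Mul R] (x : m → R) (y : n → R) : m × n → R :=
  fun q => x q.1 * y q.2

section KronVec

variable {l m n p R : Type*} [CommSemiring R]

theorem kronecker_mulVec_kronVec [Fintype m] [Fintype p] (A : Matrix l m R) (B : Matrix n p R)
    (x : m → R) (y : p → R) :
    (A ⊗ₖ B) *ᵥ kronVec x y = kronVec (A *ᵥ x) (B *ᵥ y) := by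
  ext ⟨i, j⟩
  simp only [kronVec, mulVec, dotProduct, kroneckerMap_apply, Fintype.sum_prod_type,
    Finset.sum_mul_sum]
  exact Finset.sum_congr rfl fun _ _ => Finset.sum_congr rfl fun _ _ => mul_mul_mul_comm ..

theorem add_kronVec (x₁ x₂ : m → R) (y : n → R) :
    kronVec x₁ y + kronVec x₂ y = kronVec (x₁ + x₂) y := by
  ext q
  exact (add_mul ..).symm

theorem kronVec_add (x : m → R) (y₁ y₂ : n → R) :
    kronVec x y₁ + kronVec x y₂ = kronVec x (y₁ + y₂) := by
  ext q
  exact (mul_add ..).symm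

theorem zero_kronVec (y : n → R) : kronVec (0 : m → R) y = 0 := by
  ext q
  exact zero_mul _

theorem kronVec_zero (x : m → R) : kronVec x (0 : n → R) = 0 := by
  ext q
  exact mul_zero _

end KronVec

section Projector

variable {α : Type*} [Fintype α] [DecidableEq α]

theorem projM_transpose (P : Finset α) : (projM P)ᵀ = projM P :=
  diagonal_transpose _

theorem projM_mulVec_of_support {P : Finset α} {y : α → ZMod 2} (hy : ∀ a ∉ P, y a = 0) :
    projM P *ᵥ y = y := by
  ext a
  by_cases ha : a ∈ P <;> simp [projM, mulVec_diagonal, ha, hy]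

theorem one_add_projM (P : Finset α) : 1 + projM P = projM Pᶜ := by
  ext a b
  by_cases hab : a = b
  · subst hab
    by_cases ha : a ∈ P <;> simp [projM, ha]; decide
  · simp [projM, hab]

end Projector

variable (H : Matrix C V (ZMod 2)) {S : Finset V} {T : Finset C}

theorem HZ_add_HZ'_mulVec_inl {x y : V → ZMod 2} (hy : ∀ v ∉ S, y v = 0) :
    (HZ H + HZ' H S T) *ᵥ Sum.elim (kronVec x y) 0 = kronVec ((projM Tᶜ * H) *ᵥ x) y := by
  rw [add_mulVec, HZ, HZ', fromCols_mulVec_sumElim, fromCols_mulVec_sumElim, mulVec_zero,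
    mulVec_zero, add_zero, add_zero, kronecker_mulVec_kronVec, kronecker_mulVec_kronVec,
    one_mulVec, projM_mulVec_of_support hy, add_kronVec,
    ← one_add_projM, Matrix.add_mul, Matrix.one_mul, add_mulVec]

theorem HZ_add_HZ'_mulVec_inr {x' y' : C → ZMod 2} (hy' : ∀ c ∉ T, y' c = 0) :
    (HZ H + HZ' H S T) *ᵥ Sum.elim 0 (kronVec y' x') =
      kronVec y' ((projM Sᶜ * Hᵀ) *ᵥ x') := by
  rw [add_mulVec, HZ, HZ', fromCols_mulVec_sumElim, fromCols_mulVec_sumElim, mulVec_zero,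
    mulVec_zero, zero_add, zero_add, kronecker_mulVec_kronVec, kronecker_mulVec_kronVec,
    one_mulVec, projM_mulVec_of_support hy', transpose_mul, projM_transpose, kronVec_add,
    ← one_add_projM, Matrix.add_mul, Matrix.one_mul, add_mulVec]

/-- Chain-type X operators commute with the punctured Z-stabilizers. -/
theorem stmt_17 (H : Matrix C V (ZMod 2)) (S : Finset V) (T : Finset C) :
    (∀ x y : V → ZMod 2, (projM Tᶜ * H).mulVec x = 0 → (∀ v ∉ S, y v = 0) →
      Matrix.vecMul
        (Sum.elim (fun p : V × V => x p.1 * y p.2) (fun _ : C × C => 0))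
        (HZ H + HZ' H S T)ᵀ = 0) ∧
    (∀ x' y' : C → ZMod 2, (projM Sᶜ * Hᵀ).mulVec x' = 0 → (∀ c ∉ T, y' c = 0) →
      Matrix.vecMul
        (Sum.elim (fun _ : V × V => 0) (fun p : C × C => y' p.1 * x' p.2))
        (HZ H + HZ' H S T)ᵀ = 0) := by
  refine ⟨fun x y hx hy => ?_, fun x' y' hx' hy' => ?_⟩
  · rw [vecMul_transpose]
    exact (HZ_add_HZ'_mulVec_inl H hy).trans (by rw [hx, zero_kronVec])
  · rw [vecMul_transpose]
    exact (HZ_add_HZ'_mulVec_inr H hy').trans (by rw [hx', kronVec_zero])
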